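/- Let θ₁ < θ₂ < … < θ_m be real numbers in [0, π), let v₁, …, v_m be nonzero vectors in ℝ^N, and let h₁, …, h_m : L → ℝ^N be functions satisfying ∑_{j=1}^m e^{iθ_j} ⟪h_j x, v_j⟫ = 0 for all x (as a complex equation, with real inner products). Then ∑_{j=1}^{m-1} ⟪h_j x, sin(θ_m − θ_j) • v_j⟫ = 0 for all x, and sin(θ_m − θ_j) ≠ 0 for j < m. -/

import Mathlib

/-! Multiplying the relation by `exp (-i θₘ)` and taking imaginary parts gives
`∑ⱼ sin (θₘ - θⱼ) ⟪hⱼ x, vⱼ⟫ = 0`, in which the `m`-th term vanishes. The remaining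
coefficients are nonzero because `0 < θₘ - θⱼ < π`. -/

open Complex in
theorem sum_sin_sub_mul_eq_zero_of_sum_exp_mul_eq_zero {ι : Type*} (s : Finset ι)
    (θ r : ι → ℝ) (h : ∑ j ∈ s, exp (θ j * I) * r j = 0) (α : ℝ) :
    ∑ j ∈ s, Real.sin (α - θ j) * r j = 0 := by
  have hrot : ∑ j ∈ s, exp (↑(θ j - α) * I) * r j = 0 := by
    simp only [ofReal_sub, sub_mul, exp_sub, div_mul_eq_mul_div, ← Finset.sum_div, h,
      zero_div]
  have him := congrArg im hrot
  simp only [im_sum, im_mul_ofReal, exp_ofReal_mul_I_im, zero_im] at him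
  simpa only [← neg_sub α, Real.sin_neg, neg_mul, Finset.sum_neg_distrib, neg_eq_zero]
    using him

theorem elimination_step_general
    {L : Type*} (m N : ℕ) (θ : Fin (m + 1) → ℝ) (hmono : StrictMono θ)
    (hrange : ∀ j, θ j ∈ Set.Ico 0 Real.pi)
    (v : Fin (m + 1) → EuclideanSpace ℝ (Fin N))
    (h : Fin (m + 1) → L → EuclideanSpace ℝ (Fin N))
    (heq : ∀ x, ∑ j, Complex.exp (θ j * Complex.I)
        * ((inner ℝ (h j x) (v j) : ℝ) : ℂ) = 0) :
    (∀ x : L, ∑ j : Fin m,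
        (inner ℝ (h j.castSucc x)
          (Real.sin (θ (Fin.last m) - θ j.castSucc) • v j.castSucc) : ℝ) = 0)
    ∧ ∀ j : Fin m, Real.sin (θ (Fin.last m) - θ j.castSucc) ≠ 0 := by
  refine ⟨fun x => ?_, fun j => ?_⟩
  · have hsum := sum_sin_sub_mul_eq_zero_of_sum_exp_mul_eq_zero Finset.univ θ
      (fun j => inner ℝ (h j x) (v j)) (heq x) (θ (Fin.last m))
    rw [Fin.sum_univ_castSucc, sub_self, Real.sin_zero, zero_mul, add_zero] at hsum
    simpa only [real_inner_smul_right] using hsum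
  · have hlt : θ j.castSucc < θ (Fin.last m) := hmono (Fin.castSucc_lt_last j)
    have hπ : θ (Fin.last m) - θ j.castSucc < Real.pi := by
      linarith [(hrange (Fin.last m)).2, (hrange j.castSucc).1]
    exact (Real.sin_pos_of_pos_of_lt_pi (sub_pos.2 hlt) hπ).ne'

theorem elimination_step
    {L : Type*} (m N : ℕ) (θ : Fin (m + 1) → ℝ) (hmono : StrictMono θ)
    (hrange : ∀ j, θ j ∈ Set.Ico 0 Real.pi)
    (v : Fin (m + 1) → EuclideanSpace ℝ (Fin N)) (hv : ∀ j, v j ≠ 0)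
    (h : Fin (m + 1) → L → EuclideanSpace ℝ (Fin N))
    (heq : ∀ x, ∑ j, Complex.exp (θ j * Complex.I)
        * ((inner ℝ (h j x) (v j) : ℝ) : ℂ) = 0) :
    (∀ x : L, ∑ j : Fin m,
        (inner ℝ (h j.castSucc x)
          (Real.sin (θ (Fin.last m) - θ j.castSucc) • v j.castSucc) : ℝ) = 0)
    ∧ ∀ j : Fin m, Real.sin (θ (Fin.last m) - θ j.castSucc) ≠ 0 :=
  elimination_step_general m N θ hmono hrange v h heq
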